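/- Let M ≥ 1 and let u_1, …, u_M be real numbers with ∑_{m=1}^{M} u_m < 0. Then there exists σ_0 > 0 such that for all σ ≥ σ_0: (1/M)·∑_{m=1}^{M} Φ(u_m/σ) ≤ 1/2 + (∑_{m=1}^{M} u_m)/(4Mσ). -/

import Mathlib

/-!
Write `c = √(2π)`. Since the Gaussian density is within `t²/2` of `1` near the origin,
`Φ x ≤ 1/2 + x/c + |x|³/(2c)`. Summing over `x = u_m/σ` bounds the average of `Φ (u_m/σ)` by
`1/2 + S/(M c σ) + O(σ⁻³)` with `S = ∑ u_m < 0`; because `c < 4`, the leading term `S/(M c σ)` is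
strictly below `S/(4 M σ)`, and the gap absorbs the `O(σ⁻³)` term once `σ` is large.
-/

open MeasureTheory

/-- The standard normal CDF `Φ(x) = ∫_{-∞}^{x} e^{-t²/2}/√(2π) dt`. -/
noncomputable def stdGaussianCDF (x : ℝ) : ℝ :=
  (∫ t in Set.Iic x, Real.exp (-(t ^ 2) / 2)) / Real.sqrt (2 * Real.pi)

lemma integrable_exp_neg_sq_div_two : Integrable (fun t : ℝ => Real.exp (-(t ^ 2) / 2)) := by
  simpa [neg_div, div_eq_inv_mul] using
    integrable_exp_neg_mul_sq (show (0 : ℝ) < 1 / 2 by norm_num)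

lemma integral_Iic_zero_exp_neg_sq_div_two :
    ∫ t in Set.Iic (0 : ℝ), Real.exp (-(t ^ 2) / 2) = Real.sqrt (2 * Real.pi) / 2 := by
  have hsymm : ∫ t in Set.Iic (0 : ℝ), Real.exp (-(t ^ 2) / 2)
      = ∫ t in Set.Ioi (0 : ℝ), Real.exp (-(t ^ 2) / 2) := by
    have := integral_comp_neg_Iic (0 : ℝ) fun t => Real.exp (-(t ^ 2) / 2)
    simpa using this
  rw [hsymm]
  convert integral_gaussian_Ioi (1 / 2) using 3 with t
  · ring_nf
  · ring_nf

lemma stdGaussianCDF_eq_half_add (x : ℝ) :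
    stdGaussianCDF x
      = 1 / 2 + (∫ t in (0 : ℝ)..x, Real.exp (-(t ^ 2) / 2)) / Real.sqrt (2 * Real.pi) := by
  have hc : Real.sqrt (2 * Real.pi) ≠ 0 := by positivity
  have hsplit := intervalIntegral.integral_Iic_sub_Iic (a := 0) (b := x) (μ := volume)
    integrable_exp_neg_sq_div_two.integrableOn integrable_exp_neg_sq_div_two.integrableOn
  rw [integral_Iic_zero_exp_neg_sq_div_two] at hsplit
  rw [stdGaussianCDF, ← hsplit]
  field_simp
  ring

lemma abs_integral_exp_neg_sq_div_two_sub_le (x : ℝ) :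
    |(∫ t in (0 : ℝ)..x, Real.exp (-(t ^ 2) / 2)) - x| ≤ |x| ^ 3 / 2 := by
  have hint : IntervalIntegrable (fun t : ℝ => Real.exp (-(t ^ 2) / 2)) volume 0 x :=
    integrable_exp_neg_sq_div_two.intervalIntegrable
  have hdiff : (∫ t in (0 : ℝ)..x, Real.exp (-(t ^ 2) / 2)) - x
      = ∫ t in (0 : ℝ)..x, (Real.exp (-(t ^ 2) / 2) - 1) := by
    simp [intervalIntegral.integral_sub hint intervalIntegrable_const]
  have hpointwise : ∀ t ∈ Set.uIoc 0 x, ‖Real.exp (-(t ^ 2) / 2) - 1‖ ≤ x ^ 2 / 2 := by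
    intro t ht
    have htx : t ^ 2 ≤ x ^ 2 := by
      rcases Set.mem_uIoc.mp ht with h | h <;> nlinarith [h.1, h.2]
    have hupper : Real.exp (-(t ^ 2) / 2) ≤ 1 := Real.exp_le_one_iff.mpr (by nlinarith)
    have hlower : 1 - t ^ 2 / 2 ≤ Real.exp (-(t ^ 2) / 2) := by
      linarith [Real.add_one_le_exp (-(t ^ 2) / 2)]
    rw [Real.norm_eq_abs, abs_le]
    constructor <;> linarith
  have hbound := intervalIntegral.norm_integral_le_of_norm_le_const hpointwise
  rw [hdiff, ← Real.norm_eq_abs]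
  calc _ ≤ x ^ 2 / 2 * |x - 0| := hbound
    _ = |x| ^ 3 / 2 := by rw [sub_zero, ← sq_abs x]; ring

lemma stdGaussianCDF_le (x : ℝ) :
    stdGaussianCDF x
      ≤ 1 / 2 + x / Real.sqrt (2 * Real.pi) + |x| ^ 3 / (2 * Real.sqrt (2 * Real.pi)) := by
  have hintegral := (abs_le.mp (abs_integral_exp_neg_sq_div_two_sub_le x)).2
  have hdiv : (∫ t in (0 : ℝ)..x, Real.exp (-(t ^ 2) / 2)) / Real.sqrt (2 * Real.pi)
      ≤ (x + |x| ^ 3 / 2) / Real.sqrt (2 * Real.pi) := by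
    gcongr
    linarith
  rw [stdGaussianCDF_eq_half_add]
  linarith [show (x + |x| ^ 3 / 2) / Real.sqrt (2 * Real.pi)
    = x / Real.sqrt (2 * Real.pi) + |x| ^ 3 / (2 * Real.sqrt (2 * Real.pi)) by ring]

lemma sum_stdGaussianCDF_div_le {ι : Type*} (s : Finset ι) (u : ι → ℝ) {σ : ℝ} (hσ : 0 < σ) :
    ∑ i ∈ s, stdGaussianCDF (u i / σ)
      ≤ s.card / 2 + (∑ i ∈ s, u i) / Real.sqrt (2 * Real.pi) / σ
        + (∑ i ∈ s, |u i| ^ 3) / (2 * Real.sqrt (2 * Real.pi)) / σ ^ 3 := by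
  calc ∑ i ∈ s, stdGaussianCDF (u i / σ)
      ≤ ∑ i ∈ s, (1 / 2 + u i / σ / Real.sqrt (2 * Real.pi)
          + |u i / σ| ^ 3 / (2 * Real.sqrt (2 * Real.pi))) :=
        Finset.sum_le_sum fun i _ => stdGaussianCDF_le (u i / σ)
    _ = _ := by
        simp only [Finset.sum_add_distrib, Finset.sum_const, nsmul_eq_mul, Finset.sum_div,
          abs_div, abs_of_pos hσ, div_pow]
        congr 1
        · congr 1
          · ring
          · exact Finset.sum_congr rfl fun i _ => by ring
        · exact Finset.sum_congr rfl fun i _ => by ring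

lemma exists_forall_ge_div_add_div_pow_three_le {a b k : ℝ} (hab : a < b) (hk : 0 ≤ k) :
    ∃ σ₀ > 0, ∀ σ ≥ σ₀, a / σ + k / σ ^ 3 ≤ b / σ := by
  refine ⟨max 1 (k / (b - a)), lt_max_of_lt_left one_pos, fun σ hσ => ?_⟩
  have hσ1 : 1 ≤ σ := le_of_max_le_left hσ
  have hσ0 : 0 < σ := one_pos.trans_le hσ1
  have hkσ : k ≤ (b - a) * σ := (div_le_iff₀' (sub_pos.mpr hab)).mp (le_of_max_le_right hσ)
  have hk' : k / σ ^ 2 ≤ b - a := by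
    rw [div_le_iff₀ (by positivity)]
    nlinarith
  calc a / σ + k / σ ^ 3 = (a + k / σ ^ 2) / σ := by ring
    _ ≤ (a + (b - a)) / σ := by gcongr
    _ = b / σ := by ring

lemma sqrt_two_mul_pi_lt_four : Real.sqrt (2 * Real.pi) < 4 :=
  (Real.sqrt_lt' (by norm_num)).mpr (by nlinarith [Real.pi_lt_d2])

theorem stmt_5 (M : ℕ) (hM : 1 ≤ M) (u : Fin M → ℝ) (hsum : ∑ m, u m < 0) :
    ∃ σ₀ > (0 : ℝ), ∀ σ ≥ σ₀,
      (1 / M) * ∑ m, stdGaussianCDF (u m / σ) ≤ 1 / 2 + (∑ m, u m) / (4 * M * σ) := by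
  set c := Real.sqrt (2 * Real.pi)
  have hc : 0 < c := by positivity
  have hleading : (∑ m, u m) / c < (∑ m, u m) / 4 := by
    rw [div_lt_div_iff₀ hc (by norm_num)]
    nlinarith [sqrt_two_mul_pi_lt_four]
  obtain ⟨σ₀, hσ₀, hlarge⟩ := exists_forall_ge_div_add_div_pow_three_le hleading
    (k := (∑ m, |u m| ^ 3) / (2 * c)) (by positivity)
  refine ⟨σ₀, hσ₀, fun σ hσ => ?_⟩
  have hσ0 : 0 < σ := hσ₀.trans_le hσ
  have hM0 : (0 : ℝ) < M := by exact_mod_cast hM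
  have hbound := sum_stdGaussianCDF_div_le Finset.univ u hσ0
  rw [Finset.card_univ, Fintype.card_fin] at hbound
  calc (1 / M) * ∑ m, stdGaussianCDF (u m / σ)
      ≤ (1 / M) * (M / 2 + (∑ m, u m) / 4 / σ) := by
        gcongr
        linarith [hlarge σ hσ]
    _ = 1 / 2 + (∑ m, u m) / (4 * M * σ) := by
        field_simp
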